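/- arXiv:0804.1316 — 6 statements merged into one kernel-verified Lean document; each statement's English description precedes it below -/
import Mathlib

section
/- A C² function u on an open set X ⊂ ℝⁿ is subaffine (i.e., for every compact K ⊂ X and affine function a, u ≤ a on ∂K implies u ≤ a on K) if and only if for every x ∈ X the Hessian of u at x has at least one eigenvalue ≥ 0. -/
/-!
If the Hessian of `u` is negative definite at `x₀`, a second-order Taylor bound gives
`u x ≤ u x₀ + Du(x₀)(x - x₀) - c ‖x - x₀‖²` near `x₀`; the affine function
`x ↦ u x₀ + Du(x₀)(x - x₀) - c r²` then dominates `u` on the sphere of radius `r` but not at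
its centre. Conversely, if `u` exceeds an affine `a` somewhere in `K` but not on `∂K`, then
`u - a + δ |x|²` still attains its maximum over `K` at an interior point `x₀` for small `δ > 0`;
along a direction `v ≠ 0` in which the Hessian of `u` at `x₀` is nonnegative, this function
has positive second derivative, which is impossible at a local maximum.
-/

open Matrix Set Filter Topology

theorem le_add_deriv_add_of_deriv2_le {g g' g'' : ℝ → ℝ} {m : ℝ}
    (hg : ∀ t ∈ Icc (0 : ℝ) 1, HasDerivAt g (g' t) t)
    (hg' : ∀ t ∈ Icc (0 : ℝ) 1, HasDerivAt g' (g'' t) t)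
    (hm : ∀ t ∈ Icc (0 : ℝ) 1, g'' t ≤ m) :
    g 1 ≤ g 0 + g' 0 + m / 2 := by
  have hslope : ∀ t ∈ Icc (0 : ℝ) 1, g' t ≤ g' 0 + m * t := by
    refine image_le_of_deriv_right_le_deriv_boundary
      (fun t ht => (hg' t ht).continuousAt.continuousWithinAt)
      (fun t ht => (hg' t (Ico_subset_Icc_self ht)).hasDerivWithinAt) (by simp)
      (by fun_prop) (fun t _ => ((hasDerivAt_id t).const_mul m).const_add _ |>.hasDerivWithinAt)
      (fun t ht => by simpa using hm t (Ico_subset_Icc_self ht))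
  have hB : ∀ t : ℝ, HasDerivAt (fun t => g 0 + g' 0 * t + m / 2 * t ^ 2) (g' 0 + m * t) t :=
    fun t => ((((hasDerivAt_id t).const_mul (g' 0)).const_add (g 0)).add
      ((hasDerivAt_pow 2 t).const_mul (m / 2))).congr_deriv (by simp; ring)
  simpa using image_le_of_deriv_right_le_deriv_boundary
    (fun t ht => (hg t ht).continuousAt.continuousWithinAt)
    (fun t ht => (hg t (Ico_subset_Icc_self ht)).hasDerivWithinAt) (by simp)
    (by fun_prop) (fun t _ => (hB t).hasDerivWithinAt)
    (fun t ht => hslope t (Ico_subset_Icc_self ht)) (right_mem_Icc.2 zero_le_one)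

theorem IsLocalMax.deriv2_nonpos_of_hasDerivAt {f f' : ℝ → ℝ} {a f'' : ℝ} (h : IsLocalMax f a)
    (hf : ∀ᶠ x in 𝓝 a, HasDerivAt f (f' x) x) (hf' : HasDerivAt f' f'' a) : f'' ≤ 0 := by
  by_contra! hpos
  have hderiv : deriv f =ᶠ[𝓝 a] f' := hf.mono fun x hx => hx.deriv
  have hmin : IsLocalMin f a := isLocalMin_of_deriv_deriv_pos
    (by rwa [(hf'.congr_of_eventuallyEq hderiv).deriv]) (h.deriv_eq_zero)
    hf.self_of_nhds.continuousAt
  have hconst : f =ᶠ[𝓝 a] fun _ => f a := by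
    filter_upwards [h, hmin] with x hmax hmin using le_antisymm hmax hmin
  have hzero : f' =ᶠ[𝓝 a] fun _ => 0 := by
    filter_upwards [hf, hconst.eventuallyEq_nhds] with x hx hxc
    exact hx.unique ((hasDerivAt_const x (f a)).congr_of_eventuallyEq hxc)
  exact hpos.ne' (hf'.unique ((hasDerivAt_const a 0).congr_of_eventuallyEq hzero))

theorem IsCompact.exists_isLocalMax_mem_interior {α : Type*} [TopologicalSpace α] [T2Space α]
    {K : Set α} {f : α → ℝ} {x : α} (hK : IsCompact K) (hf : ContinuousOn f K) (hx : x ∈ K)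
    (hfr : ∀ y ∈ frontier K, f y < f x) : ∃ x₀ ∈ interior K, IsLocalMax f x₀ := by
  obtain ⟨x₀, hx₀K, hmax⟩ := hK.exists_isMaxOn ⟨x, hx⟩ hf
  have hx₀ : x₀ ∈ interior K := by
    by_contra hint
    exact (hfr x₀ (hK.isClosed.frontier_eq ▸ ⟨hx₀K, hint⟩)).not_ge (hmax hx)
  exact ⟨x₀, hx₀, hmax.isLocalMax (mem_interior_iff_mem_nhds.1 hx₀)⟩

section NormedSpace

variable {E F : Type*} [NormedAddCommGroup E] [NormedSpace ℝ E] [NormedAddCommGroup F]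
  [NormedSpace ℝ F]

theorem hasDerivAt_comp_add_smul {f : E → F} {x v : E} {t : ℝ}
    (hf : DifferentiableAt ℝ f (x + t • v)) :
    HasDerivAt (fun s : ℝ => f (x + s • v)) (fderiv ℝ f (x + t • v) v) t := by
  have hline : HasDerivAt (fun s : ℝ => x + s • v) v t := by
    simpa using ((hasDerivAt_id t).smul_const v).const_add x
  exact hf.hasFDerivAt.comp_hasDerivAt t hline

theorem hasDerivAt_fderiv_comp_add_smul {f : E → F} {x v : E} {t : ℝ}
    (hf : ContDiffAt ℝ 2 f (x + t • v)) :
    HasDerivAt (fun s : ℝ => fderiv ℝ f (x + s • v) v)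
      (fderiv ℝ (fderiv ℝ f) (x + t • v) v v) t := by
  have hf' : DifferentiableAt ℝ (fderiv ℝ f) (x + t • v) :=
    (hf.fderiv_right (by norm_num)).differentiableAt one_ne_zero
  simpa using (hasDerivAt_comp_add_smul hf').clm_apply (hasDerivAt_const t v)

theorem exists_pos_forall_apply_self_le_neg_mul_sq [FiniteDimensional ℝ E]
    (A : E →L[ℝ] E →L[ℝ] ℝ) (hA : ∀ v ≠ 0, A v v < 0) :
    ∃ c > 0, ∀ w, A w w ≤ -c * ‖w‖ ^ 2 := by
  cases subsingleton_or_nontrivial E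
  · exact ⟨1, one_pos, fun w => by simp [Subsingleton.elim w 0]⟩
  have hcont : Continuous fun w : E => A w w := by fun_prop
  obtain ⟨w₀, hw₀, hmax⟩ := (isCompact_sphere (0 : E) 1).exists_isMaxOn
    (NormedSpace.sphere_nonempty.2 zero_le_one) hcont.continuousOn
  have hw₀ : ‖w₀‖ = 1 := mem_sphere_zero_iff_norm.1 hw₀
  refine ⟨-A w₀ w₀, neg_pos.2 (hA w₀ (norm_ne_zero_iff.1 (by simp [hw₀]))), fun w => ?_⟩
  rcases eq_or_ne w 0 with rfl | hw
  · simp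
  have hnorm : ‖w‖ ≠ 0 := norm_ne_zero_iff.2 hw
  have hunit : ‖w‖⁻¹ • w ∈ Metric.sphere (0 : E) 1 := by
    simp [norm_smul, hnorm]
  calc A w w = ‖w‖ ^ 2 * A (‖w‖⁻¹ • w) (‖w‖⁻¹ • w) := by
        simp only [map_smul, _root_.smul_apply, smul_eq_mul]
        field_simp
    _ ≤ ‖w‖ ^ 2 * A w₀ w₀ := by gcongr; exact hmax hunit
    _ = - -A w₀ w₀ * ‖w‖ ^ 2 := by ring

theorem eventually_le_add_fderiv_sub_mul_norm_sq [FiniteDimensional ℝ E] {u : E → ℝ} {x₀ : E}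
    (hu : ContDiffAt ℝ 2 u x₀) (hneg : ∀ v ≠ 0, fderiv ℝ (fderiv ℝ u) x₀ v v < 0) :
    ∃ c > 0, ∀ᶠ x in 𝓝 x₀, u x ≤ u x₀ + fderiv ℝ u x₀ (x - x₀) - c * ‖x - x₀‖ ^ 2 := by
  set H := fderiv ℝ (fderiv ℝ u)
  obtain ⟨c, hc, hH⟩ := exists_pos_forall_apply_self_le_neg_mul_sq (H x₀) hneg
  have hHcont : ContinuousAt H x₀ :=
    ((hu.fderiv_right (m := 1) (by norm_num)).fderiv_right (m := 0) le_rfl).continuousAt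
  have hnear : ∀ᶠ y in 𝓝 x₀, ContDiffAt ℝ 2 u y ∧ ∀ w, H y w w ≤ -(c / 2) * ‖w‖ ^ 2 := by
    filter_upwards [hu.eventually (by simp),
      (Metric.tendsto_nhds (u := H)).1 hHcont _ (half_pos hc)] with y hy hHy
    refine ⟨hy, fun w => ?_⟩
    have hdiff : ‖H y - H x₀‖ < c / 2 := (dist_eq_norm (H y) (H x₀)).symm.trans_lt hHy
    calc H y w w = H x₀ w w + (H y - H x₀) w w := by simp
      _ ≤ -c * ‖w‖ ^ 2 + ‖H y - H x₀‖ * ‖w‖ * ‖w‖ :=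
          add_le_add (hH w) ((le_abs_self _).trans ((H y - H x₀).le_opNorm₂ w w))
      _ ≤ -c * ‖w‖ ^ 2 + c / 2 * ‖w‖ * ‖w‖ := by gcongr
      _ = -(c / 2) * ‖w‖ ^ 2 := by ring
  obtain ⟨ε, hε, hball⟩ := Metric.eventually_nhds_iff_ball.1 hnear
  refine ⟨c / 4, by positivity, ?_⟩
  filter_upwards [Metric.ball_mem_nhds x₀ hε] with x hx
  have hseg : ∀ t ∈ Icc (0 : ℝ) 1, x₀ + t • (x - x₀) ∈ Metric.ball x₀ ε :=
    fun t ht => (convex_ball x₀ ε).add_smul_sub_mem (Metric.mem_ball_self hε) hx ht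
  have := le_add_deriv_add_of_deriv2_le (m := -(c / 2) * ‖x - x₀‖ ^ 2)
    (fun t ht => hasDerivAt_comp_add_smul ((hball _ (hseg t ht)).1.differentiableAt (by simp)))
    (fun t ht => hasDerivAt_fderiv_comp_add_smul (hball _ (hseg t ht)).1)
    (fun t ht => (hball _ (hseg t ht)).2 _)
  simp only [one_smul, zero_smul, add_zero, add_sub_cancel] at this
  linarith

theorem IsLocalMax.fderiv_fderiv_apply_add_two_mul_nonpos {u : E → ℝ} {x v : E} {α β γ : ℝ}
    (hu : ContDiffAt ℝ 2 u x)
    (hmax : IsLocalMax (fun t : ℝ => u (x + t • v) + (α + β * t + γ * t ^ 2)) 0) :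
    fderiv ℝ (fderiv ℝ u) x v v + 2 * γ ≤ 0 := by
  have hline : Tendsto (fun t : ℝ => x + t • v) (𝓝 0) (𝓝 x) :=
    (by fun_prop : Continuous fun t : ℝ => x + t • v).tendsto' 0 x (by simp)
  have hquad : ∀ t : ℝ, HasDerivAt (fun t => α + β * t + γ * t ^ 2) (β + 2 * γ * t) t :=
    fun t => ((((hasDerivAt_id t).const_mul β).const_add α).add
      ((hasDerivAt_pow 2 t).const_mul γ)).congr_deriv (by simp; ring)
  refine hmax.deriv2_nonpos_of_hasDerivAt
    (f' := fun t => fderiv ℝ u (x + t • v) v + (β + 2 * γ * t)) ?_ ?_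
  · filter_upwards [hline (hu.eventually (by simp))] with t (ht : ContDiffAt ℝ 2 u (x + t • v))
    exact (hasDerivAt_comp_add_smul (ht.differentiableAt (by simp))).add (hquad t)
  · exact ((hasDerivAt_fderiv_comp_add_smul (f := u) (x := x) (v := v) (t := 0)
      (by simpa using hu)).add (((hasDerivAt_id 0).const_mul (2 * γ)).const_add β)).congr_deriv
      (by simp)

end NormedSpace

section Subaffine

variable {ι : Type*} [Fintype ι]

def IsSubaffineOn (u : (ι → ℝ) → ℝ) (X : Set (ι → ℝ)) : Prop :=
  ∀ K ⊆ X, IsCompact K → ∀ (c : ι → ℝ) (d : ℝ),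
    (∀ x ∈ frontier K, u x ≤ c ⬝ᵥ x + d) → ∀ x ∈ K, u x ≤ c ⬝ᵥ x + d

variable {u : (ι → ℝ) → ℝ} {X : Set (ι → ℝ)}

theorem IsSubaffineOn.exists_fderiv_fderiv_apply_nonneg (h : IsSubaffineOn u X) {x₀ : ι → ℝ}
    (hX : X ∈ 𝓝 x₀) (hu : ContDiffAt ℝ 2 u x₀) :
    ∃ v ≠ 0, 0 ≤ fderiv ℝ (fderiv ℝ u) x₀ v v := by
  classical
  by_contra! hneg
  obtain ⟨c, hc, hle⟩ := eventually_le_add_fderiv_sub_mul_norm_sq hu hneg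
  obtain ⟨r, hr, hball⟩ := Metric.nhds_basis_closedBall.mem_iff.1 (inter_mem hX hle)
  obtain ⟨a, ha⟩ : ∃ a : ι → ℝ, ∀ x, a ⬝ᵥ x = fderiv ℝ u x₀ x :=
    ⟨(dotProductEquiv ℝ ι).symm (fderiv ℝ u x₀).toLinearMap, fun x =>
      LinearMap.congr_fun ((dotProductEquiv ℝ ι).apply_symm_apply (fderiv ℝ u x₀).toLinearMap) x⟩
  have hsphere : ∀ x ∈ frontier (Metric.closedBall x₀ r),
      u x ≤ a ⬝ᵥ x + (u x₀ - fderiv ℝ u x₀ x₀ - c * r ^ 2) := by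
    intro x hx
    have hxs := Metric.frontier_closedBall_subset_sphere hx
    have hxr : ‖x - x₀‖ = r := mem_sphere_iff_norm.1 hxs
    have hux := (hball (Metric.sphere_subset_closedBall hxs)).2
    simp only [mem_ofPred_eq, map_sub, hxr] at hux
    rw [ha]
    linarith
  have hux₀ := h _ (fun x hx => (hball hx).1) (isCompact_closedBall x₀ r) a _ hsphere x₀
    (Metric.mem_closedBall_self hr.le)
  rw [ha] at hux₀
  nlinarith [mul_pos hc (pow_pos hr 2)]

theorem isSubaffineOn_of_forall_exists_fderiv_fderiv_apply_nonneg (hX : IsOpen X)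
    (hu : ContDiffOn ℝ 2 u X) (h : ∀ x ∈ X, ∃ v ≠ 0, 0 ≤ fderiv ℝ (fderiv ℝ u) x v v) :
    IsSubaffineOn u X := by
  intro K hKX hK c d hfr xb hxb
  by_contra! hlt
  obtain ⟨R, hR⟩ := hK.bddAbove_image (f := fun x => x ⬝ᵥ x)
    (continuous_id.dotProduct continuous_id).continuousOn
  obtain ⟨δ, hδ, hδR⟩ := exists_pos_mul_lt (sub_pos.2 hlt) R
  set φ : (ι → ℝ) → ℝ := fun x => u x - (c ⬝ᵥ x + d) + δ * (x ⬝ᵥ x)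
  have hφ : ContinuousOn φ K :=
    ((hu.continuousOn.mono hKX).sub (by fun_prop)).add
      (continuous_const.mul (continuous_id.dotProduct continuous_id)).continuousOn
  have hfr' : ∀ y ∈ frontier K, φ y < φ xb := by
    intro y hy
    have hyR : y ⬝ᵥ y ≤ R := hR ⟨y, hK.isClosed.frontier_subset hy, rfl⟩
    have hxb0 : 0 ≤ xb ⬝ᵥ xb := Finset.sum_nonneg fun i _ => mul_self_nonneg (xb i)
    have := hfr y hy
    simp only [φ]
    nlinarith
  obtain ⟨x₀, hx₀, hmax⟩ := hK.exists_isLocalMax_mem_interior hφ hxb hfr'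
  have hx₀X : x₀ ∈ X := hKX (interior_subset hx₀)
  obtain ⟨v, hv, hvv⟩ := h x₀ hx₀X
  have hline : IsLocalMax (fun t : ℝ => u (x₀ + t • v) + ((δ * (x₀ ⬝ᵥ x₀) - (c ⬝ᵥ x₀ + d)) +
      (2 * δ * (x₀ ⬝ᵥ v) - c ⬝ᵥ v) * t + δ * (v ⬝ᵥ v) * t ^ 2)) 0 := by
    have := (show IsLocalMax φ (x₀ + (0 : ℝ) • v) by simpa using hmax).comp_continuous
      (g := fun t : ℝ => x₀ + t • v) (by fun_prop)
    convert this using 1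
    funext t
    simp only [φ, Function.comp_apply, dotProduct_add, add_dotProduct, dotProduct_smul,
      smul_dotProduct, smul_eq_mul, dotProduct_comm v x₀]
    ring
  have hpos : 0 < v ⬝ᵥ v := by simpa using dotProduct_star_self_pos_iff.2 hv
  have := hline.fderiv_fderiv_apply_add_two_mul_nonpos (hu.contDiffAt (hX.mem_nhds hx₀X))
  nlinarith [mul_pos hδ hpos]

end Subaffine

/-- A `C²` function `u` on an open set `X ⊂ ℝⁿ` is subaffine (for every compact
`K ⊂ X` and affine function `a`, `u ≤ a` on `∂K` implies `u ≤ a` on `K`) if and only if at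
every `x ∈ X` the Hessian of `u` has at least one eigenvalue `≥ 0`, i.e. it is not negative
definite: there is `v ≠ 0` with `Hess_x u (v,v) ≥ 0`. -/
theorem stmt3 (n : ℕ) (X : Set (Fin n → ℝ)) (hX : IsOpen X)
    (u : (Fin n → ℝ) → ℝ) (hu : ContDiffOn ℝ 2 u X) :
    (∀ K : Set (Fin n → ℝ), K ⊆ X → IsCompact K →
        ∀ (c : Fin n → ℝ) (d : ℝ),
          (∀ x ∈ frontier K, u x ≤ c ⬝ᵥ x + d) → ∀ x ∈ K, u x ≤ c ⬝ᵥ x + d)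
      ↔ ∀ x ∈ X, ∃ v : Fin n → ℝ, v ≠ 0 ∧
          0 ≤ iteratedFDerivWithin ℝ 2 u X x ![v, v] := by
  have hess : ∀ x ∈ X, ∀ v,
      iteratedFDerivWithin ℝ 2 u X x ![v, v] = fderiv ℝ (fderiv ℝ u) x v v := by
    intro x hx v
    rw [iteratedFDerivWithin_of_isOpen 2 hX hx, iteratedFDeriv_two_apply]
    simp
  constructor
  · intro hsub x hx
    obtain ⟨v, hv, hnonneg⟩ := IsSubaffineOn.exists_fderiv_fderiv_apply_nonneg hsub
      (hX.mem_nhds hx) (hu.contDiffAt (hX.mem_nhds hx))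
    exact ⟨v, hv, hess x hx v ▸ hnonneg⟩
  · intro h
    refine isSubaffineOn_of_forall_exists_fderiv_fderiv_apply_nonneg hX hu fun x hx => ?_
    obtain ⟨v, hv, hnonneg⟩ := h x hx
    exact ⟨v, hv, hess x hx v ▸ hnonneg⟩
end

section
/- Suppose u is an upper semicontinuous function on an open set X ⊂ ℝⁿ which is not subaffine. Then there exist a point x₀ ∈ X, an affine function a, and ε > 0 such that (u − a)(x) ≤ −ε|x − x₀|² for all x in some neighborhood of x₀, and (u − a)(x₀) = 0. -/
open Matrix Set Topology

/-! If `u ≤ a` on `∂K` but `u x₁ > a x₁` for some `x₁ ∈ K`, the inequality survives tilting `a`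
by a small multiple `ε |x|²`: then `u - a + ε |x|²` is larger at `x₁` than anywhere on `∂K`.
By upper semicontinuity it attains its maximum over `K`, necessarily at an interior point `x₀`. The
paraboloid `a - ε |x|²`, shifted up to touch `u` at `x₀`, lies above `u` on `K`, and expanding
`|x|²` around `x₀` writes it as an affine function minus `ε |x - x₀|²`. -/

theorem UpperSemicontinuousOn.exists_isMaxOn_mem_interior {α β : Type*} [TopologicalSpace α]
    [LinearOrder β] {K : Set α} {f : α → β} (hf : UpperSemicontinuousOn f K) (hK : IsCompact K)
    {x₁ : α} (hx₁ : x₁ ∈ K) (hfr : ∀ z ∈ frontier K, f z < f x₁) :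
    ∃ x₀ ∈ interior K, IsMaxOn f K x₀ := by
  obtain ⟨x₀, hx₀K, hmax⟩ := hf.exists_isMaxOn ⟨x₁, hx₁⟩ hK
  refine ⟨x₀, by_contra fun hint => ?_, hmax⟩
  exact (hfr x₀ ⟨subset_closure hx₀K, hint⟩).not_ge (hmax hx₁)

theorem UpperSemicontinuousOn.sub_coe {α : Type*} [TopologicalSpace α] {s : Set α}
    {u : α → EReal} {φ : α → ℝ} (hu : UpperSemicontinuousOn u s) (hφ : Continuous φ) :
    UpperSemicontinuousOn (fun x => u x - φ x) s := by
  simp only [sub_eq_add_neg, ← EReal.coe_neg]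
  refine hu.add'
    ((continuous_coe_real_ereal.comp hφ.neg).upperSemicontinuous.upperSemicontinuousOn s)
    fun x _ => EReal.continuousAt_add (Or.inr (EReal.coe_ne_bot _)) (Or.inr (EReal.coe_ne_top _))

theorem IsCompact.exists_pos_forall_mul_lt {α : Type*} [TopologicalSpace α] {K : Set α}
    (hK : IsCompact K) {f : α → ℝ} (hf : ContinuousOn f K) {m : ℝ} (hm : 0 < m) :
    ∃ ε > 0, ∀ x ∈ K, ε * f x < m := by
  obtain ⟨B, hB⟩ := hK.bddAbove_image hf
  refine ⟨m / (|B| + 1), by positivity, fun x hx => ?_⟩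
  have hfx : f x ≤ |B| := (hB (mem_image_of_mem f hx)).trans (le_abs_self B)
  calc m / (|B| + 1) * f x ≤ m / (|B| + 1) * |B| := by gcongr
    _ < m / (|B| + 1) * (|B| + 1) := by gcongr; linarith
    _ = m := div_mul_cancel₀ _ (by positivity)

theorem dotProduct_self_nonneg {ι : Type*} [Fintype ι] (y : ι → ℝ) : 0 ≤ y ⬝ᵥ y := by
  simpa using dotProduct_star_self_nonneg y

theorem sq_norm_le_dotProduct_self {ι : Type*} [Fintype ι] (y : ι → ℝ) : ‖y‖ ^ 2 ≤ y ⬝ᵥ y := by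
  have hnorm : ‖y‖ ≤ √(y ⬝ᵥ y) := by
    refine (pi_norm_le_iff_of_nonneg (Real.sqrt_nonneg _)).2 fun i => Real.abs_le_sqrt ?_
    rw [sq]
    exact Finset.single_le_sum (fun j _ => mul_self_nonneg (y j)) (Finset.mem_univ i)
  calc ‖y‖ ^ 2 ≤ √(y ⬝ᵥ y) ^ 2 := by gcongr
    _ = y ⬝ᵥ y := Real.sq_sqrt (dotProduct_self_nonneg y)

theorem exists_isMaxOn_sub_mem_interior {α : Type*} [TopologicalSpace α] [T2Space α]
    {K : Set α} (hK : IsCompact K) {u : α → EReal} (hu : UpperSemicontinuousOn u K)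
    {a q : α → ℝ} (ha : Continuous a) (hq : Continuous q) (hq₀ : ∀ x, 0 ≤ q x)
    (hfr : ∀ z ∈ frontier K, u z ≤ a z) {x₁ : α} (hx₁ : x₁ ∈ K) (hlt : (a x₁ : EReal) < u x₁) :
    ∃ ε > 0, ∃ x₀ ∈ interior K,
      u x₀ ≠ ⊥ ∧ IsMaxOn (fun x => u x - ((a x - ε * q x : ℝ) : EReal)) K x₀ := by
  obtain ⟨r, har, hru⟩ := EReal.lt_iff_exists_real_btwn.1 hlt
  obtain ⟨ε, hε, hsmall⟩ :=
    hK.exists_pos_forall_mul_lt hq.continuousOn (sub_pos.2 (EReal.coe_lt_coe_iff.1 har))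
  set φ : α → ℝ := fun x => a x - ε * q x
  set v : α → EReal := fun x => u x - (φ x : EReal)
  have hv₁ : ((r - φ x₁ : ℝ) : EReal) < v x₁ := by
    rw [EReal.lt_sub_iff_add_lt (Or.inr (EReal.coe_ne_top _)) (Or.inr (EReal.coe_ne_bot _)),
      ← EReal.coe_add, sub_add_cancel]
    exact hru
  have hvfr : ∀ z ∈ frontier K, v z < v x₁ := fun z hz => calc
    v z ≤ ((a z - φ z : ℝ) : EReal) := EReal.sub_le_sub (hfr z hz) le_rfl
    _ < ((r - φ x₁ : ℝ) : EReal) := by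
      have hz_small := hsmall z (hK.isClosed.frontier_subset hz)
      have hx₁_nonneg := mul_nonneg hε.le (hq₀ x₁)
      exact EReal.coe_lt_coe_iff.2 (by simp only [φ]; linarith)
    _ < v x₁ := hv₁
  obtain ⟨x₀, hx₀, hmax⟩ := (hu.sub_coe (by fun_prop)).exists_isMaxOn_mem_interior hK hx₁ hvfr
  refine ⟨ε, hε, x₀, hx₀, fun hbot => ?_, hmax⟩
  have hv₀ : v x₀ = ⊥ := by simp [v, hbot]
  exact (EReal.coe_ne_bot _) (le_bot_iff.1 (hv₁.le.trans (hv₀ ▸ hmax hx₁)))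

theorem exists_paraboloid_above_of_isMaxOn {ι : Type*} [Fintype ι] {K : Set (ι → ℝ)}
    {u : (ι → ℝ) → EReal} {c : ι → ℝ} {d ε : ℝ} {x₀ : ι → ℝ} (hε : 0 ≤ ε)
    (hx₀ : x₀ ∈ interior K) (htop : u x₀ ≠ ⊤) (hbot : u x₀ ≠ ⊥)
    (hmax : IsMaxOn (fun x => u x - ((c ⬝ᵥ x + d - ε * (x ⬝ᵥ x) : ℝ) : EReal)) K x₀) :
    ∃ (c' : ι → ℝ) (d' : ℝ),
      (∀ᶠ x in 𝓝 x₀, u x ≤ ((c' ⬝ᵥ x + d' - ε * ‖x - x₀‖ ^ 2 : ℝ) : EReal)) ∧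
      u x₀ = ((c' ⬝ᵥ x₀ + d' : ℝ) : EReal) := by
  set φ : (ι → ℝ) → ℝ := fun x => c ⬝ᵥ x + d - ε * (x ⬝ᵥ x)
  set r₀ := (u x₀).toReal
  have hu₀ : u x₀ = r₀ := (EReal.coe_toReal htop hbot).symm
  have htouch : ∀ x ∈ K, u x ≤ ((φ x + (r₀ - φ x₀) : ℝ) : EReal) := fun x hx => by
    have hx' : u x - φ x ≤ u x₀ - φ x₀ := hmax hx
    rwa [hu₀, ← EReal.coe_sub, EReal.sub_le_iff_le_add (Or.inr (EReal.coe_ne_top _))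
      (Or.inr (EReal.coe_ne_bot _)), ← EReal.coe_add, add_comm] at hx'
  set c' := c - (2 * ε) • x₀
  refine ⟨c', r₀ - c' ⬝ᵥ x₀, ?_, by rw [hu₀, add_sub_cancel]⟩
  filter_upwards [isOpen_interior.mem_nhds hx₀] with x hx
  refine (htouch x (interior_subset hx)).trans (EReal.coe_le_coe_iff.2 ?_)
  have hexpand : φ x + (r₀ - φ x₀) =
      c' ⬝ᵥ x + (r₀ - c' ⬝ᵥ x₀) - ε * ((x - x₀) ⬝ᵥ (x - x₀)) := by
    simp only [φ, c', sub_dotProduct, dotProduct_sub, smul_dotProduct, smul_eq_mul,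
      dotProduct_comm x x₀]
    ring
  rw [hexpand]
  gcongr
  exact sq_norm_le_dotProduct_self _

theorem stmt4_general (n : ℕ) (X : Set (Fin n → ℝ))
    (u : (Fin n → ℝ) → EReal)
    (husc : UpperSemicontinuousOn u X) (hne : ∀ x ∈ X, u x ≠ ⊤)
    (hnotsa : ¬ (∀ K : Set (Fin n → ℝ), K ⊆ X → IsCompact K →
        ∀ (c : Fin n → ℝ) (d : ℝ),
          (∀ x ∈ frontier K, u x ≤ ((c ⬝ᵥ x + d : ℝ) : EReal)) →
          ∀ x ∈ K, u x ≤ ((c ⬝ᵥ x + d : ℝ) : EReal))) :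
    ∃ x₀ ∈ X, ∃ (c : Fin n → ℝ) (d : ℝ) (ε : ℝ), 0 < ε ∧
      (∀ᶠ x in nhds x₀, u x ≤ ((c ⬝ᵥ x + d - ε * ‖x - x₀‖ ^ 2 : ℝ) : EReal)) ∧
      u x₀ = ((c ⬝ᵥ x₀ + d : ℝ) : EReal) := by
  push Not at hnotsa
  obtain ⟨K, hKX, hK, c, d, hfr, x₁, hx₁, hlt⟩ := hnotsa
  obtain ⟨ε, hε, x₀, hx₀, hbot, hmax⟩ := exists_isMaxOn_sub_mem_interior hK (husc.mono hKX)
    (a := fun x => c ⬝ᵥ x + d) (by fun_prop) (continuous_id.dotProduct continuous_id)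
    dotProduct_self_nonneg hfr hx₁ hlt
  have hx₀X : x₀ ∈ X := hKX (interior_subset hx₀)
  obtain ⟨c', d', hle, heq⟩ :=
    exists_paraboloid_above_of_isMaxOn hε.le hx₀ (hne x₀ hx₀X) hbot hmax
  exact ⟨x₀, hx₀X, c', d', ε, hε, hle, heq⟩

/-- Lemma A.2: If an upper semicontinuous `[-∞,∞)`-valued function `u` on an
open set `X ⊂ ℝⁿ` is not subaffine, then there are `x₀ ∈ X`, an affine function
`a(x) = ⟨c,x⟩ + d`, and `ε > 0` with `u − a ≤ −ε|x−x₀|²` near `x₀` and `(u−a)(x₀) = 0`. -/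
theorem stmt4 (n : ℕ) (X : Set (Fin n → ℝ)) (hX : IsOpen X)
    (u : (Fin n → ℝ) → EReal)
    (husc : UpperSemicontinuousOn u X) (hne : ∀ x ∈ X, u x ≠ ⊤)
    (hnotsa : ¬ (∀ K : Set (Fin n → ℝ), K ⊆ X → IsCompact K →
        ∀ (c : Fin n → ℝ) (d : ℝ),
          (∀ x ∈ frontier K, u x ≤ ((c ⬝ᵥ x + d : ℝ) : EReal)) →
          ∀ x ∈ K, u x ≤ ((c ⬝ᵥ x + d : ℝ) : EReal))) :
    ∃ x₀ ∈ X, ∃ (c : Fin n → ℝ) (d : ℝ) (ε : ℝ), 0 < ε ∧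
      (∀ᶠ x in nhds x₀, u x ≤ ((c ⬝ᵥ x + d - ε * ‖x - x₀‖ ^ 2 : ℝ) : EReal)) ∧
      u x₀ = ((c ⬝ᵥ x₀ + d : ℝ) : EReal) :=
  stmt4_general n X u husc hne hnotsa
end

section
/- Let I ⊂ ℝ be an open interval and u : I → [−∞,∞) upper semicontinuous. Then u is subaffine on I if and only if either u ≡ −∞ on I or u is a (finite-valued) convex function on I. -/
/-!
If a subaffine `u` takes the value `-∞` at some `s`, then at any other point `t` of the open
interval pick `x` on the far side of `t` from `s`, where `u x < ∞`: affine functions through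
`(x, M)` with `M ≥ u x` may take an arbitrarily negative value at `t`, and they dominate `u` at
both ends of the interval between `x` and `s`, so `u t = -∞`. If `u` is finite, subaffinity
against the chord through two points of the graph is exactly the convexity inequality;
conversely a convex function minus an affine one is convex, hence bounded on a segment by its
values at the endpoints.
-/

open Set

def SubaffineOn (u : ℝ → EReal) (I : Set ℝ) : Prop :=
  ∀ α β : ℝ, α ≤ β → Icc α β ⊆ I → ∀ c d : ℝ,
    u α ≤ ((c * α + d : ℝ) : EReal) → u β ≤ ((c * β + d : ℝ) : EReal) →
    ∀ t ∈ Icc α β, u t ≤ ((c * t + d : ℝ) : EReal)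

theorem exists_affine_eq_eq {x y : ℝ} (hxy : x ≠ y) (p q : ℝ) :
    ∃ c d : ℝ, c * x + d = p ∧ c * y + d = q := by
  have : y - x ≠ 0 := sub_ne_zero.2 hxy.symm
  refine ⟨(q - p) / (y - x), p - (q - p) / (y - x) * x, by ring, ?_⟩
  field_simp
  ring

theorem ConvexOn.le_affine_of_le {I : Set ℝ} {g : ℝ → ℝ} (hg : ConvexOn ℝ I g)
    {x y t c d : ℝ} (hx : x ∈ I) (hy : y ∈ I) (ht : t ∈ uIcc x y)
    (hgx : g x ≤ c * x + d) (hgy : g y ≤ c * y + d) : g t ≤ c * t + d := by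
  have h := (hg.sub (((LinearMap.mul ℝ ℝ c).concaveOn hg.1).add_const d)).le_on_segment
    hx hy (segment_eq_uIcc x y ▸ ht)
  simp only [Pi.sub_apply, Pi.add_apply, LinearMap.mul_apply'] at h
  linarith [max_le (sub_nonpos.2 hgx) (sub_nonpos.2 hgy)]

namespace SubaffineOn

variable {u v : ℝ → EReal} {I : Set ℝ}

theorem congr (hu : SubaffineOn u I) (h : EqOn u v I) : SubaffineOn v I := by
  intro α β hαβ hI c d hα hβ t ht
  rw [← h (hI (left_mem_Icc.2 hαβ))] at hα
  rw [← h (hI (right_mem_Icc.2 hαβ))] at hβ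
  rw [← h (hI ht)]
  exact hu α β hαβ hI c d hα hβ t ht

theorem le_of_mem_uIcc (hu : SubaffineOn u I) {x y t c d : ℝ} (hI : uIcc x y ⊆ I)
    (hx : u x ≤ ((c * x + d : ℝ) : EReal)) (hy : u y ≤ ((c * y + d : ℝ) : EReal))
    (ht : t ∈ uIcc x y) : u t ≤ ((c * t + d : ℝ) : EReal) := by
  rcases le_total x y with hxy | hyx
  · rw [uIcc_of_le hxy] at hI ht
    exact hu x y hxy hI c d hx hy t ht
  · rw [uIcc_of_ge hyx] at hI ht
    exact hu y x hyx hI c d hy hx t ht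

theorem eq_bot_of_mem_uIcc (hu : SubaffineOn u I) {x s t : ℝ} (hI : uIcc x s ⊆ I)
    (hx : u x ≠ ⊤) (hs : u s = ⊥) (ht : t ∈ uIcc x s) (htx : t ≠ x) : u t = ⊥ := by
  refine (EReal.eq_bot_iff_forall_lt _).2 fun r => ?_
  obtain ⟨c, d, hcx, hct⟩ := exists_affine_eq_eq htx.symm (u x).toReal (r - 1)
  have h := hu.le_of_mem_uIcc hI (hcx ▸ EReal.le_coe_toReal hx) (hs ▸ bot_le) ht
  rw [hct] at h
  exact h.trans_lt (EReal.coe_lt_coe_iff.2 (by linarith))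

theorem eq_bot_of_eq_bot (hu : SubaffineOn u I) (hopen : IsOpen I) (hord : I.OrdConnected)
    (hne : ∀ t ∈ I, u t ≠ ⊤) {s t : ℝ} (hs : s ∈ I) (hus : u s = ⊥) (ht : t ∈ I) :
    u t = ⊥ := by
  rcases lt_trichotomy t s with hts | rfl | hst
  · obtain ⟨x, hxt, hx⟩ := (hopen.eventually_mem ht).exists_lt
    exact hu.eq_bot_of_mem_uIcc (hord.uIcc_subset hx hs) (hne x hx) hus
      (Icc_subset_uIcc ⟨hxt.le, hts.le⟩) hxt.ne'
  · exact hus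
  · obtain ⟨x, htx, hx⟩ := (hopen.eventually_mem ht).exists_gt
    exact hu.eq_bot_of_mem_uIcc (hord.uIcc_subset hx hs) (hne x hx) hus
      (Icc_subset_uIcc' ⟨hst.le, htx.le⟩) htx.ne

end SubaffineOn

theorem subaffineOn_coe_iff_convexOn {I : Set ℝ} {g : ℝ → ℝ} (hI : Convex ℝ I) :
    SubaffineOn (fun t => (g t : EReal)) I ↔ ConvexOn ℝ I g := by
  simp only [SubaffineOn, EReal.coe_le_coe_iff]
  refine ⟨fun h => LinearOrder.convexOn_of_lt hI ?_, fun hg α β hαβ hsub c d hα hβ t ht => ?_⟩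
  · intro x hx y hy hxy a b ha hb hab
    obtain ⟨c, d, hcx, hcy⟩ := exists_affine_eq_eq hxy.ne (g x) (g y)
    have hmem : a • x + b • y ∈ Icc x y :=
      segment_eq_Icc hxy.le ▸ ⟨a, b, ha.le, hb.le, hab, rfl⟩
    calc g (a • x + b • y) ≤ c * (a • x + b • y) + d :=
          h x y hxy.le (hI.ordConnected.out hx hy) c d hcx.ge hcy.ge _ hmem
      _ = a • g x + b • g y := by
          rw [← hcx, ← hcy, smul_eq_mul, smul_eq_mul, smul_eq_mul, smul_eq_mul]
          linear_combination -d * hab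
  · exact hg.le_affine_of_le (hsub (left_mem_Icc.2 hαβ)) (hsub (right_mem_Icc.2 hαβ))
      (Icc_subset_uIcc ht) hα hβ

theorem stmt5_general (I : Set ℝ) (hopen : IsOpen I) (hord : I.OrdConnected)
    (u : ℝ → EReal) (hne : ∀ t ∈ I, u t ≠ ⊤) :
    (∀ α β : ℝ, α ≤ β → Set.Icc α β ⊆ I → ∀ c d : ℝ,
        u α ≤ ((c * α + d : ℝ) : EReal) → u β ≤ ((c * β + d : ℝ) : EReal) →
        ∀ t ∈ Set.Icc α β, u t ≤ ((c * t + d : ℝ) : EReal))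
      ↔ ((∀ t ∈ I, u t = ⊥) ∨
          ∃ g : ℝ → ℝ, ConvexOn ℝ I g ∧ ∀ t ∈ I, u t = (g t : EReal)) := by
  change SubaffineOn u I ↔ _
  constructor
  · intro hu
    by_cases hbot : ∃ s ∈ I, u s = ⊥
    · obtain ⟨s, hs, hus⟩ := hbot
      exact Or.inl fun t ht => hu.eq_bot_of_eq_bot hopen hord hne hs hus ht
    · push Not at hbot
      have heq : EqOn u (fun t => ((u t).toReal : EReal)) I := fun t ht =>
        (EReal.coe_toReal (hne t ht) (hbot t ht)).symm
      exact Or.inr ⟨fun t => (u t).toReal,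
        (subaffineOn_coe_iff_convexOn hord.convex).1 (hu.congr heq), heq⟩
  · rintro (hbot | ⟨g, hg, hug⟩)
    · intro α β _ hsub c d _ _ t ht
      rw [hbot t (hsub ht)]
      exact bot_le
    · exact ((subaffineOn_coe_iff_convexOn hord.convex).2 hg).congr fun t ht => (hug t ht).symm

/-- Let `I ⊂ ℝ` be an open interval (open and order-connected) and
`u : I → [−∞,∞)` upper semicontinuous.  Then `u` is subaffine on `I` (whenever
`[α,β] ⊆ I` and an affine function `a` dominates `u` at `α` and `β`, it dominates `u` on
`[α,β]`) if and only if either `u ≡ −∞` on `I` or `u` is a finite convex function on `I`. -/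
theorem stmt5 (I : Set ℝ) (hopen : IsOpen I) (hord : I.OrdConnected)
    (u : ℝ → EReal) (husc : UpperSemicontinuousOn u I) (hne : ∀ t ∈ I, u t ≠ ⊤) :
    (∀ α β : ℝ, α ≤ β → Set.Icc α β ⊆ I → ∀ c d : ℝ,
        u α ≤ ((c * α + d : ℝ) : EReal) → u β ≤ ((c * β + d : ℝ) : EReal) →
        ∀ t ∈ Set.Icc α β, u t ≤ ((c * t + d : ℝ) : EReal))
      ↔ ((∀ t ∈ I, u t = ⊥) ∨
          ∃ g : ℝ → ℝ, ConvexOn ℝ I g ∧ ∀ t ∈ I, u t = (g t : EReal)) :=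
  stmt5_general I hopen hord u hne
end

section
/- Let K ⊂ ℝⁿ be compact and u : K → [−∞,∞) upper semicontinuous such that u is subaffine on the interior of K. Then sup_K u ≤ sup_{∂K} u. -/
open Matrix Metric

/-- Maximum Principle: If `K ⊂ ℝⁿ` is compact and `u : K → [−∞,∞)` is upper
semicontinuous on `K` and subaffine on the interior of `K`, then
`sup_K u ≤ sup_{∂K} u`. -/
theorem stmt6 (n : ℕ) (K : Set (Fin n → ℝ)) (hK : IsCompact K)
    (u : (Fin n → ℝ) → EReal)
    (husc : UpperSemicontinuousOn u K) (hne : ∀ x ∈ K, u x ≠ ⊤)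
    (hsa : ∀ L : Set (Fin n → ℝ), L ⊆ interior K → IsCompact L →
        ∀ (c : Fin n → ℝ) (d : ℝ),
          (∀ x ∈ frontier L, u x ≤ ((c ⬝ᵥ x + d : ℝ) : EReal)) →
          ∀ x ∈ L, u x ≤ ((c ⬝ᵥ x + d : ℝ) : EReal)) :
    sSup (u '' K) ≤ sSup (u '' frontier K) := by
  have hKclosed : IsClosed K := hK.isClosed
  set M := sSup (u '' frontier K) with hM
  -- main claim
  have main : ∀ x ∈ K, u x ≤ M := by
    intro x0 hx0
    by_contra hlt
    push_neg at hlt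
    -- pick a real level t between M and u x0
    obtain ⟨t, htM, htx0⟩ := EReal.exists_between_coe_real hlt
    -- frontier bound
    have hMfr : ∀ y ∈ frontier K, u y ≤ M := fun y hy => le_sSup ⟨y, hy, rfl⟩
    -- if the frontier is empty
    by_cases hfr : frontier K = ∅
    · have hintK : interior K = K := by
        have := hKclosed.frontier_eq
        rw [hfr] at this
        have : K ⊆ interior K := by
          intro z hz
          by_contra hz'
          exact absurd (this ▸ (Set.mem_diff z).2 ⟨hz, hz'⟩) (Set.notMem_empty z)
        exact le_antisymm interior_subset this
      have := hsa K (le_of_eq hintK.symm) hK 0 t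
        (by intro x hx; rw [hfr] at hx; exact absurd hx (Set.notMem_empty x)) x0 hx0
      simp only [zero_dotProduct, zero_add] at this
      exact absurd (lt_of_le_of_lt this htx0) (lt_irrefl _)
    -- frontier nonempty case
    have hKcne : Kᶜ.Nonempty := by
      rw [Set.nonempty_iff_ne_empty]
      intro h
      rw [Set.compl_empty_iff] at h
      rw [h, frontier_univ] at hfr
      exact hfr rfl
    -- the superlevel set F
    set F := {y ∈ K | (t : EReal) ≤ u y} with hF
    have hFsub : F ⊆ K := fun y hy => hy.1
    have hFclosed : IsClosed F := by
      rw [← isOpen_compl_iff]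
      rw [isOpen_iff_mem_nhds]
      intro z hz
      by_cases hzK : z ∈ K
      · have : u z < (t : EReal) := by
          by_contra h
          exact hz ⟨hzK, not_lt.1 h⟩
        have hev := husc z hzK (t : EReal) this
        rcases mem_nhdsWithin.1 hev with ⟨V, hVopen, hzV, hVsub⟩
        refine Filter.mem_of_superset (hVopen.mem_nhds hzV) ?_
        intro w hw hwF
        exact absurd hwF.2 (not_le.2 (hVsub ⟨hw, hwF.1⟩))
      · refine Filter.mem_of_superset (hKclosed.isOpen_compl.mem_nhds hzK) ?_
        intro w hw hwF
        exact hw hwF.1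
    have hFcomp : IsCompact F := hK.of_isClosed_subset hFclosed hFsub
    have hx0F : x0 ∈ F := ⟨hx0, le_of_lt htx0⟩
    have hFne : F.Nonempty := ⟨x0, hx0F⟩
    -- F avoids the frontier, hence lies in the interior
    have hFint : F ⊆ interior K := by
      intro y hy
      by_contra hy'
      have hyfr : y ∈ frontier K := by
        rw [hKclosed.frontier_eq]
        exact ⟨hy.1, hy'⟩
      have := lt_of_le_of_lt (le_trans hy.2 (hMfr y hyfr)) htM
      exact absurd this (lt_irrefl _)
    -- distance to the complement
    set g : (Fin n → ℝ) → ℝ := fun x => infDist x Kᶜ with hg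
    have hgcont : Continuous g := continuous_infDist_pt _
    have hgpos_sub : {x | 0 < g x} ⊆ K := by
      intro x hx
      by_contra hxK
      have hx' : 0 < g x := hx
      rw [hg] at hx'
      simp only at hx'
      rw [infDist_zero_of_mem (show x ∈ Kᶜ from hxK)] at hx'
      exact lt_irrefl _ hx'
    have hgpos_int : {x | 0 < g x} ⊆ interior K :=
      interior_maximal hgpos_sub (isOpen_lt continuous_const hgcont)
    have hint_pos : ∀ x ∈ interior K, 0 < g x := by
      intro x hx
      rcases Metric.isOpen_iff.1 isOpen_interior x hx with ⟨r, hr, hball⟩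
      have : r ≤ g x := by
        rw [hg]
        simp only
        by_contra hd
        rcases (infDist_lt_iff hKcne).1 (not_le.1 hd) with ⟨y, hy, hdy⟩
        exact hy (interior_subset (hball (by simpa [Metric.mem_ball, dist_comm] using hdy)))
      linarith
    -- minimum of g on F
    obtain ⟨xm, hxmF, hxm⟩ := hFcomp.exists_isMinOn hFne hgcont.continuousOn
    set ε := g xm with hε
    have hεpos : 0 < ε := hint_pos xm (hFint hxmF)
    -- the compact set L
    set L := {x | ε / 2 ≤ g x} with hL
    have hLclosed : IsClosed L := isClosed_le continuous_const hgcont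
    have hLint : L ⊆ interior K := by
      intro x hx
      have hx' : ε / 2 ≤ g x := hx
      exact hgpos_int (show 0 < g x by linarith)
    have hLcomp : IsCompact L :=
      hK.of_isClosed_subset hLclosed (fun x hx => interior_subset (hLint hx))
    have hFL : F ⊆ interior L := by
      intro x hx
      have hgx : ε ≤ g x := hxm hx
      exact interior_maximal (fun y (hy : ε / 2 < g y) => le_of_lt hy)
        (isOpen_lt continuous_const hgcont) (show ε / 2 < g x by linarith)
    -- apply subaffinity with the constant affine function t
    have happ := hsa L hLint hLcomp 0 t ?_ x0 (interior_subset (hFL hx0F))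
    · simp only [zero_dotProduct, zero_add] at happ
      exact absurd (lt_of_le_of_lt happ htx0) (lt_irrefl _)
    · intro x hx
      simp only [zero_dotProduct, zero_add]
      have hxL : x ∈ L := frontier_subset_iff_isClosed.2 hLclosed hx
      have hxK : x ∈ K := interior_subset (hLint hxL)
      have hxF : x ∉ F := fun hxF => hx.2 (hFL hxF)
      have : ¬ (t : EReal) ≤ u x := fun h => hxF ⟨hxK, h⟩
      exact le_of_lt (not_le.1 this)
  refine sSup_le ?_
  rintro b ⟨x, hx, rfl⟩
  exact main x hx
end

section
/- Let P₊ ⊂ Sym²(ℝⁿ) be a closed convex cone contained in the positive semidefinite cone P, with dual cone P⁺, and suppose ℝⁿ = N ⊕ W is an orthogonal direct sum decomposition. Then W is P₊-free (i.e., P₊ ∩ Sym²(W) = {0}) if and only if the orthogonal projection P_N onto N lies in the interior of P⁺. -/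
/-!
Write `A = Bᴴ B` and `Q = C Cᴴ` (both are positive semidefinite; a symmetric idempotent is a
star projection). Then `tr (A Q) = ‖B C‖²` in the Frobenius norm, so `tr (A Q) ≥ 0`, with
equality iff `B C = 0`, i.e. iff `A Q = 0`. Hence `Q` pairs strictly positively with every
nonzero element of `P₊` exactly when no nonzero element of `P₊` lies in `Sym²(ker Q)`.
-/

open Matrix

namespace Matrix

open scoped ComplexOrder MatrixOrder

variable {𝕜 n : Type*} [RCLike 𝕜] [Fintype n] {A Q : Matrix n n 𝕜}

lemma PosSemidef.trace_mul_pos (hA : A.PosSemidef) (hQ : Q.PosSemidef) (hAQ : A * Q ≠ 0) :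
    0 < (A * Q).trace := by
  classical
  obtain ⟨B, rfl⟩ := CStarAlgebra.nonneg_iff_eq_star_mul_self.mp hA.nonneg
  obtain ⟨C, rfl⟩ := CStarAlgebra.nonneg_iff_eq_mul_star_self.mp hQ.nonneg
  simp only [star_eq_conjTranspose] at hAQ ⊢
  have htrace : (Bᴴ * B * (C * Cᴴ)).trace = ((B * C)ᴴ * (B * C)).trace := by
    rw [conjTranspose_mul, ← mul_assoc, trace_mul_comm _ Cᴴ]
    simp only [mul_assoc]
  have hBC : B * C ≠ 0 := fun h => hAQ (by rw [mul_assoc, ← mul_assoc B, h]; simp)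
  rw [htrace]
  exact lt_of_le_of_ne (posSemidef_conjTranspose_mul_self _).trace_nonneg
    (Ne.symm (trace_conjTranspose_mul_self_eq_zero_iff.not.mpr hBC))

lemma IsHermitian.posSemidef_of_mul_self_eq (hQ : Q.IsHermitian) (hQQ : Q * Q = Q) :
    Q.PosSemidef :=
  nonneg_iff_posSemidef.mp (IsStarProjection.nonneg ⟨hQQ, hQ⟩)

end Matrix

theorem stmt7_general (n : ℕ) (Plow : Set (Matrix (Fin n) (Fin n) ℝ))
    (hpos : ∀ A ∈ Plow, A.PosSemidef)
    (Pup : Set (Matrix (Fin n) (Fin n) ℝ))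
    (hInt : intrinsicInterior ℝ Pup =
        {B | B.IsSymm ∧ ∀ A ∈ Plow, A ≠ 0 → 0 < (A * B).trace})
    (Q : Matrix (Fin n) (Fin n) ℝ) (hQsym : Q.IsSymm) (hQidem : Q * Q = Q) :
    (∀ A ∈ Plow, A * Q = 0 → A = 0) ↔ Q ∈ intrinsicInterior ℝ Pup := by
  have hQ : Q.PosSemidef :=
    (isHermitian_iff_isSelfAdjoint.mpr hQsym).posSemidef_of_mul_self_eq hQidem
  rw [hInt]
  constructor
  · intro hfree
    exact ⟨hQsym, fun A hA hA0 => (hpos A hA).trace_mul_pos hQ (mt (hfree A hA) hA0)⟩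
  · rintro ⟨-, hQpos⟩ A hA hAQ
    by_contra hA0
    simpa [hAQ] using hQpos A hA hA0

/-- Lemma 10.2: Let `P₊ ⊂ Sym²(ℝⁿ)` be a closed convex cone contained in the
positive semidefinite cone, with dual cone `P⁺`, and let `ℝⁿ = N ⊕ W` be an orthogonal
decomposition, `Q = P_N` the orthogonal projection onto `N` (so `W = ker Q` and
`Sym²(W) = {A : A·Q = 0}`).  Then `W` is `P₊`-free (`P₊ ∩ Sym²(W) = {0}`) iff
`P_N ∈ Int P⁺`, the interior of `P⁺` in `Sym²(ℝⁿ)`, which is assumed characterized by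
`⟨A,B⟩ > 0` for all nonzero `A ∈ P₊`. -/
theorem stmt7 (n : ℕ) (Plow : Set (Matrix (Fin n) (Fin n) ℝ))
    (hclosed : IsClosed Plow) (hconv : Convex ℝ Plow)
    (hcone : ∀ c : ℝ, 0 ≤ c → ∀ A ∈ Plow, c • A ∈ Plow)
    (hpos : ∀ A ∈ Plow, A.PosSemidef)
    (Pup : Set (Matrix (Fin n) (Fin n) ℝ))
    (hPup : Pup = {B | B.IsSymm ∧ ∀ A ∈ Plow, 0 ≤ (A * B).trace})
    (hInt : intrinsicInterior ℝ Pup =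
        {B | B.IsSymm ∧ ∀ A ∈ Plow, A ≠ 0 → 0 < (A * B).trace})
    (Q : Matrix (Fin n) (Fin n) ℝ) (hQsym : Q.IsSymm) (hQidem : Q * Q = Q) :
    (∀ A ∈ Plow, A * Q = 0 → A = 0) ↔ Q ∈ intrinsicInterior ℝ Pup :=
  stmt7_general n Plow hpos Pup hInt Q hQsym hQidem
end

section
/- Let G ⊂ G(p,ℝⁿ) be a closed subset of the Grassmannian involving all the variables of ℝⁿ (i.e., there is no hyperplane W with G ⊂ Sym²(W)). Then every A in the relative interior of the convex cone P₊(G) generated by G (interior taken in span(G)) is positive definite. -/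
/-!
Every nonnegative combination of orthogonal projections is positive semidefinite, and so is every
limit of such, so the quadratic form `M ↦ xᵀ M x` is nonnegative on the cone `S`. If `A` lies in
the relative interior of `S` and `xᵀ A x = 0` for some `x ≠ 0`, then for every `Q ∈ S` the line
from `Q` through `A` stays in `S` slightly beyond `A`; a nonnegative affine function vanishing at
`A` must then vanish at `Q` as well. Hence `Q x = 0` for every `Q ∈ G`, i.e. all of `G` lives in
`Sym²(x^⊥)`, contradicting that `G` involves all the variables.
-/

open Matrix Set Filter Topology

section IntrinsicInterior

variable {E : Type*} [AddCommGroup E] [Module ℝ E] [TopologicalSpace E]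
  [IsTopologicalAddGroup E] [ContinuousSMul ℝ E]

theorem exists_one_lt_lineMap_mem_of_mem_intrinsicInterior {s : Set E} {a q : E}
    (ha : a ∈ intrinsicInterior ℝ s) (hq : q ∈ s) :
    ∃ t : ℝ, 1 < t ∧ AffineMap.lineMap q a t ∈ s := by
  obtain ⟨a, ha, rfl⟩ := ha
  let c : ℝ → affineSpan ℝ s := fun t =>
    ⟨AffineMap.lineMap q a t, AffineMap.lineMap_mem t (subset_affineSpan ℝ s hq) a.2⟩
  have hc : Continuous c := AffineMap.lineMap_continuous.subtype_mk _
  have hc1 : c 1 = a := Subtype.ext (AffineMap.lineMap_apply_one q a)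
  have hnhds : ∀ᶠ t in 𝓝[>] (1 : ℝ), c t ∈ interior (Subtype.val ⁻¹' s) :=
    nhdsWithin_le_nhds (hc.tendsto 1 (isOpen_interior.mem_nhds (hc1 ▸ ha)))
  obtain ⟨t, ht, hts⟩ := (hnhds.and self_mem_nhdsWithin).exists
  exact ⟨t, hts, interior_subset (s := Subtype.val ⁻¹' s) ht⟩

theorem AffineMap.eq_zero_of_mem_intrinsicInterior {s : Set E} (f : E →ᵃ[ℝ] ℝ)
    (hf : ∀ x ∈ s, 0 ≤ f x) {a : E} (ha : a ∈ intrinsicInterior ℝ s) (hfa : f a = 0)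
    {q : E} (hq : q ∈ s) : f q = 0 := by
  obtain ⟨t, ht, hts⟩ := exists_one_lt_lineMap_mem_of_mem_intrinsicInterior ha hq
  have := hf _ hts
  rw [f.apply_lineMap, hfa, AffineMap.lineMap_apply_ring] at this
  nlinarith [hf q hq]

end IntrinsicInterior

section PosSemidef

open scoped ComplexOrder

variable {n 𝕜 : Type*} [Fintype n] [RCLike 𝕜]

theorem Matrix.isClosed_setOf_posSemidef : IsClosed {M : Matrix n n 𝕜 | M.PosSemidef} := by
  simp only [posSemidef_iff_dotProduct_mulVec, ofPred_and, ofPred_forall]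
  exact (isClosed_eq continuous_id.matrix_conjTranspose continuous_id).inter
    (isClosed_iInter fun x => isClosed_le continuous_const (by fun_prop))

theorem Matrix.PosSemidef.of_isHermitian_of_mul_self_eq {R : Type*} [Ring R] [PartialOrder R]
    [StarRing R] [StarOrderedRing R] {Q : Matrix n n R} (hQ : Q.IsHermitian) (h : Q * Q = Q) :
    Q.PosSemidef := by
  simpa [hQ.eq, h] using posSemidef_conjTranspose_mul_self Q

theorem Matrix.closure_nonneg_combinations_subset_posSemidef {G : Set (Matrix n n 𝕜)}
    (hG : ∀ Q ∈ G, Q.PosSemidef) :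
    closure {A | ∃ (m : ℕ) (c : Fin m → ℝ) (ξ : Fin m → Matrix n n 𝕜),
      (∀ i, 0 ≤ c i ∧ ξ i ∈ G) ∧ A = ∑ i, c i • ξ i} ⊆ {M | M.PosSemidef} := by
  refine closure_minimal ?_ isClosed_setOf_posSemidef
  rintro _ ⟨m, c, ξ, hcξ, rfl⟩
  exact posSemidef_sum _ fun i _ => (hG _ (hcξ i).2).smul (hcξ i).1

end PosSemidef

theorem Matrix.mulVec_eq_zero_of_mem_intrinsicInterior {n : Type*} [Fintype n]
    {S : Set (Matrix n n ℝ)} (hS : ∀ M ∈ S, M.PosSemidef) {A : Matrix n n ℝ}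
    (hA : A ∈ intrinsicInterior ℝ S) {x : n → ℝ} (hx : x ⬝ᵥ A *ᵥ x = 0) {Q : Matrix n n ℝ}
    (hQ : Q ∈ S) : Q *ᵥ x = 0 := by
  classical
  let f : Matrix n n ℝ →ₗ[ℝ] ℝ :=
    LinearMap.applyₗ x ∘ₗ LinearMap.applyₗ x ∘ₗ (toLinearMap₂' ℝ).toLinearMap
  have hf : ∀ M, f M = x ⬝ᵥ M *ᵥ x := fun M => toLinearMap₂'_apply' M x x
  refine ((hS Q hQ).dotProduct_mulVec_zero_iff x).1 ?_
  simpa [hf] using f.toAffineMap.eq_zero_of_mem_intrinsicInterior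
    (fun M hM => by simpa [hf] using (hS M hM).dotProduct_mulVec_nonneg x) hA
    (by simpa [hf] using hx) hQ

theorem Matrix.exists_hyperplane_orthogonal_mem_span_singleton {K ι : Type*} [Field K] [Fintype ι]
    [DecidableEq ι] {x : ι → K} (hx : x ≠ 0) :
    ∃ W : Submodule K (ι → K), Module.finrank K W = Fintype.card ι - 1 ∧
      ∀ y, (∀ w ∈ W, y ⬝ᵥ w = 0) → y ∈ K ∙ x := by
  set f := dotProductEquiv K ι
  have hfx : f x ≠ 0 := (map_ne_zero_iff f f.injective).2 hx
  refine ⟨LinearMap.ker (f x), ?_, fun y hy => ?_⟩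
  · have := (f x).finrank_ker_add_one_of_ne_zero hfx
    simp only [Module.finrank_fintype_fun_eq_card] at this
    omega
  · have hker : ⨅ _ : Unit, LinearMap.ker (f x) ≤ LinearMap.ker (f y) := by
      rw [iInf_const]
      exact hy
    obtain ⟨c, hc⟩ := Submodule.mem_span_singleton.1 <| by
      simpa using mem_span_of_iInf_ker_le_ker hker
    exact Submodule.mem_span_singleton.2 ⟨c, f.injective (by rw [map_smul, hc])⟩

theorem stmt10_general (n p : ℕ) (G : Set (Matrix (Fin n) (Fin n) ℝ))
    (hG : ∀ Q ∈ G, Q.IsSymm ∧ Q * Q = Q ∧ Q.rank = p)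
    (hinv : ¬ ∃ W : Submodule ℝ (Fin n → ℝ), Module.finrank ℝ W = n - 1 ∧
        ∀ Q ∈ G, ∀ x : Fin n → ℝ, (∀ w ∈ W, x ⬝ᵥ w = 0) → Q.mulVec x = 0)
    (S : Set (Matrix (Fin n) (Fin n) ℝ))
    (hS : S = closure {A | ∃ (m : ℕ) (c : Fin m → ℝ) (ξ : Fin m → Matrix (Fin n) (Fin n) ℝ),
        (∀ i, 0 ≤ c i ∧ ξ i ∈ G) ∧ A = ∑ i, c i • ξ i}) :
    ∀ A ∈ intrinsicInterior ℝ S, A.PosDef := by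
  intro A hA
  have hGS : G ⊆ S := fun Q hQ =>
    hS ▸ subset_closure ⟨1, fun _ => 1, fun _ => Q, fun _ => ⟨zero_le_one, hQ⟩, by simp⟩
  have hSpsd : ∀ M ∈ S, M.PosSemidef := fun M hM =>
    closure_nonneg_combinations_subset_posSemidef (fun Q hQ =>
      .of_isHermitian_of_mul_self_eq (isHermitian_iff_isSymm.2 (hG Q hQ).1) (hG Q hQ).2.1)
      (hS ▸ hM)
  have hApsd := hSpsd A (intrinsicInterior_subset hA)
  refine .of_dotProduct_mulVec_pos hApsd.isHermitian fun x hx =>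
    (hApsd.dotProduct_mulVec_nonneg x).lt_of_ne' fun hAx => hinv ?_
  obtain ⟨W, hW, hspan⟩ := exists_hyperplane_orthogonal_mem_span_singleton hx
  refine ⟨W, by simpa using hW, fun Q hQ y hy => ?_⟩
  obtain ⟨c, rfl⟩ := Submodule.mem_span_singleton.1 (hspan y hy)
  rw [mulVec_smul, mulVec_eq_zero_of_mem_intrinsicInterior hSpsd hA (by simpa using hAx) (hGS hQ),
    smul_zero]

/-- Proposition 2.7, one direction: If a closed set `G` of rank-`p`
orthogonal projections involves all the variables of `ℝⁿ` (no hyperplane `W` with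
`G ⊂ Sym²(W)`), then every element of the relative interior (interior within the span,
i.e. the intrinsic interior) of the closed convex cone `P₊(G)` generated by `G` is
positive definite. -/
theorem stmt10 (n p : ℕ) (G : Set (Matrix (Fin n) (Fin n) ℝ)) (hGc : IsClosed G)
    (hG : ∀ Q ∈ G, Q.IsSymm ∧ Q * Q = Q ∧ Q.rank = p)
    (hinv : ¬ ∃ W : Submodule ℝ (Fin n → ℝ), Module.finrank ℝ W = n - 1 ∧
        ∀ Q ∈ G, ∀ x : Fin n → ℝ, (∀ w ∈ W, x ⬝ᵥ w = 0) → Q.mulVec x = 0)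
    (S : Set (Matrix (Fin n) (Fin n) ℝ))
    (hS : S = closure {A | ∃ (m : ℕ) (c : Fin m → ℝ) (ξ : Fin m → Matrix (Fin n) (Fin n) ℝ),
        (∀ i, 0 ≤ c i ∧ ξ i ∈ G) ∧ A = ∑ i, c i • ξ i}) :
    ∀ A ∈ intrinsicInterior ℝ S, A.PosDef :=
  stmt10_general n p G hG hinv S hS
end
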